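/- arXiv:2109.09296 — 4 statements merged into one kernel-verified Lean document; each statement's English description precedes it below -/
import Mathlib

section
/- If {τ_α}_{α∈Ω} is a normalized continuous Bessel family for a d-dimensional Hilbert space H, then ∫_Ω ∫_Ω |⟨τ_α, τ_β⟩|² dμ(α) dμ(β) ≥ μ(Ω)²/d. -/
open MeasureTheory
open scoped InnerProductSpace ENNReal ComplexConjugate

/-! In an orthonormal basis, the vectors `Φ α = τ_α τ_αᴴ` of the Hilbert–Schmidt space satisfy
`⟪Φ α, Φ β⟫ = |⟪τ_α, τ_β⟫|²`, so the double integral is `‖S‖²` for the frame operator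
`S = ∫ Φ α dμ`. Its trace is `∫ ‖τ_α‖² dμ = μ(Ω)`, and Cauchy–Schwarz against the identity matrix,
of norm `√d`, gives `μ(Ω)² ≤ d ‖S‖²`. The measure is finite because, by Parseval and the Bessel
bound, `μ(Ω) = ∫ ∑ᵢ |⟪eᵢ, τ_α⟫|² dμ ≤ b d`. -/

theorem integral_integral_inner_eq_inner_integral {Ω : Type*} [MeasurableSpace Ω]
    {μ : Measure Ω} {𝕜 E : Type*} [RCLike 𝕜] [NormedAddCommGroup E] [InnerProductSpace 𝕜 E]
    [CompleteSpace E] [NormedSpace ℝ E] {Φ : Ω → E} (hΦ : Integrable Φ μ) :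
    ∫ α, ∫ β, ⟪Φ α, Φ β⟫_𝕜 ∂μ ∂μ = ⟪∫ α, Φ α ∂μ, ∫ α, Φ α ∂μ⟫_𝕜 := by
  have hinner : ∀ α, ∫ β, ⟪Φ α, Φ β⟫_𝕜 ∂μ = conj ⟪∫ β, Φ β ∂μ, Φ α⟫_𝕜 := fun α => by
    rw [integral_inner hΦ, inner_conj_symm]
  rw [integral_congr_ae (ae_of_all _ hinner), integral_conj, integral_inner hΦ, inner_conj_symm]

namespace EuclideanSpace

variable {𝕜 ι : Type*} [RCLike 𝕜]

/-- The rank-one matrix `x xᴴ`, flattened into the Hilbert–Schmidt space `EuclideanSpace 𝕜 (ι × ι)`;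
`diagOne` is the identity matrix, so that `⟪diagOne, M⟫` is the trace of `M`. -/
noncomputable def outerSelf (x : EuclideanSpace 𝕜 ι) : EuclideanSpace 𝕜 (ι × ι) :=
  WithLp.toLp 2 fun p => x p.1 * conj (x p.2)

noncomputable def diagOne [DecidableEq ι] : EuclideanSpace 𝕜 (ι × ι) :=
  WithLp.toLp 2 fun p => if p.1 = p.2 then 1 else 0

theorem continuous_outerSelf : Continuous (outerSelf : EuclideanSpace 𝕜 ι → _) :=
  (PiLp.continuous_toLp 2 _).comp <| continuous_pi fun p =>
    (PiLp.continuous_apply 2 _ p.1).mul ((PiLp.continuous_apply 2 _ p.2).star)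

variable [Fintype ι]

theorem inner_outerSelf_outerSelf (x y : EuclideanSpace 𝕜 ι) :
    ⟪outerSelf x, outerSelf y⟫_𝕜 = ((‖⟪x, y⟫_𝕜‖ ^ 2 : ℝ) : 𝕜) := by
  rw [RCLike.ofReal_pow, ← RCLike.mul_conj, PiLp.inner_apply, PiLp.inner_apply, map_sum,
    Finset.sum_mul_sum, outerSelf, outerSelf, Fintype.sum_prod_type]
  simp only [RCLike.inner_apply, map_mul, RCLike.conj_conj]
  exact Finset.sum_congr rfl fun i _ => Finset.sum_congr rfl fun j _ => by ring

theorem inner_diagOne_outerSelf [DecidableEq ι] (x : EuclideanSpace 𝕜 ι) :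
    ⟪diagOne, outerSelf x⟫_𝕜 = (‖x‖ : 𝕜) ^ 2 := by
  rw [PiLp.inner_apply, diagOne, outerSelf, Fintype.sum_prod_type]
  simp only [RCLike.inner_apply, apply_ite (starRingEnd 𝕜), map_one, map_zero, mul_ite, mul_one,
    mul_zero, Finset.sum_ite_eq, Finset.mem_univ, if_true, RCLike.mul_conj]
  rw [← RCLike.ofReal_pow, EuclideanSpace.norm_sq_eq]
  push_cast
  rfl

theorem norm_diagOne_sq [DecidableEq ι] :
    ‖(diagOne : EuclideanSpace 𝕜 (ι × ι))‖ ^ 2 = Fintype.card ι := by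
  rw [EuclideanSpace.norm_sq_eq, diagOne, Fintype.sum_prod_type]
  simp [apply_ite]

theorem norm_outerSelf (x : EuclideanSpace 𝕜 ι) : ‖outerSelf x‖ = ‖x‖ ^ 2 := by
  have h := congrArg RCLike.re (inner_outerSelf_outerSelf x x)
  rw [inner_self_eq_norm_sq, RCLike.ofReal_re, ← inner_self_re_eq_norm, inner_self_eq_norm_sq] at h
  exact (pow_left_inj₀ (norm_nonneg _) (by positivity) two_ne_zero).mp h

end EuclideanSpace

open EuclideanSpace in
theorem welch_bound {Ω : Type*} [MeasurableSpace Ω] (μ : Measure Ω) [IsFiniteMeasure μ]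
    {𝕜 H : Type*} [RCLike 𝕜] [NormedAddCommGroup H] [InnerProductSpace 𝕜 H]
    [FiniteDimensional 𝕜 H] {τ : Ω → H} (hτ : ∀ h : H, Measurable fun α => ⟪h, τ α⟫_𝕜)
    (hnorm : ∀ α, ‖τ α‖ = 1) :
    μ.real Set.univ ^ 2 / Module.finrank 𝕜 H ≤ ∫ α, ∫ β, ‖⟪τ α, τ β⟫_𝕜‖ ^ 2 ∂μ ∂μ := by
  classical
  let b := stdOrthonormalBasis 𝕜 H
  let Φ α := outerSelf (b.repr (τ α))
  have hrepr : Measurable fun α => b.repr (τ α) := by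
    have h : (fun α => b.repr (τ α)) = fun α => WithLp.toLp 2 fun i => ⟪b i, τ α⟫_𝕜 := by
      ext; simp [b.repr_apply_apply]
    exact h ▸ (WithLp.measurable_toLp 2 _).comp (measurable_pi_lambda _ fun i => hτ (b i))
  have hΦ : Integrable Φ μ := by
    refine .of_bound (continuous_outerSelf.comp_aestronglyMeasurable hrepr.aestronglyMeasurable) 1
      (ae_of_all _ fun α => ?_)
    rw [norm_outerSelf, b.repr.norm_map, hnorm, one_pow]
  have hframe : ∫ α, ∫ β, ‖⟪τ α, τ β⟫_𝕜‖ ^ 2 ∂μ ∂μ = ‖∫ α, Φ α ∂μ‖ ^ 2 := by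
    have h := integral_integral_inner_eq_inner_integral (𝕜 := 𝕜) hΦ
    simp_rw [Φ, inner_outerSelf_outerSelf, b.repr.inner_map_map, integral_ofReal,
      inner_self_eq_norm_sq_to_K, ← RCLike.ofReal_pow] at h
    exact_mod_cast h
  let I : EuclideanSpace 𝕜 (Fin (Module.finrank 𝕜 H) × Fin (Module.finrank 𝕜 H)) := diagOne
  have htrace : ⟪I, ∫ α, Φ α ∂μ⟫_𝕜 = μ.real Set.univ := by
    simp [I, ← integral_inner hΦ, Φ, inner_diagOne_outerSelf, hnorm, RCLike.real_smul_eq_coe_mul]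
  have hdim : ‖I‖ ^ 2 = Module.finrank 𝕜 H := by
    rw [norm_diagOne_sq, Fintype.card_fin]
  rw [hframe]
  refine div_le_of_le_mul₀ (Nat.cast_nonneg _) (sq_nonneg _) ?_
  calc μ.real Set.univ ^ 2 = ‖⟪I, ∫ α, Φ α ∂μ⟫_𝕜‖ ^ 2 := by
        rw [htrace, RCLike.norm_ofReal, sq_abs]
    _ ≤ (‖I‖ * ‖∫ α, Φ α ∂μ‖) ^ 2 := by gcongr; exact norm_inner_le_norm _ _
    _ = ‖∫ α, Φ α ∂μ‖ ^ 2 * Module.finrank 𝕜 H := by rw [mul_pow, hdim, mul_comm]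

theorem isFiniteMeasure_of_bessel {Ω : Type*} [MeasurableSpace Ω] {μ : Measure Ω}
    {𝕜 H : Type*} [RCLike 𝕜] [NormedAddCommGroup H] [InnerProductSpace 𝕜 H]
    [FiniteDimensional 𝕜 H] {τ : Ω → H} {b : ℝ} (hτ : ∀ h : H, Measurable fun α => ⟪h, τ α⟫_𝕜)
    (hbessel : ∀ h : H,
      ∫⁻ α, ENNReal.ofReal (‖⟪h, τ α⟫_𝕜‖ ^ 2) ∂μ ≤ ENNReal.ofReal (b * ‖h‖ ^ 2))
    (hnorm : ∀ α, ‖τ α‖ = 1) : IsFiniteMeasure μ := by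
  let e := stdOrthonormalBasis 𝕜 H
  have hparseval : ∀ α, ∑ i, ENNReal.ofReal (‖⟪e i, τ α⟫_𝕜‖ ^ 2) = 1 := fun α => by
    rw [← ENNReal.ofReal_sum_of_nonneg fun i _ => by positivity, e.sum_sq_norm_inner_right,
      hnorm, one_pow, ENNReal.ofReal_one]
  refine ⟨?_⟩
  calc μ Set.univ = ∫⁻ α, ∑ i, ENNReal.ofReal (‖⟪e i, τ α⟫_𝕜‖ ^ 2) ∂μ := by
        simp only [hparseval, lintegral_one]
    _ = ∑ i, ∫⁻ α, ENNReal.ofReal (‖⟪e i, τ α⟫_𝕜‖ ^ 2) ∂μ :=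
        lintegral_finsetSum _ fun i _ => ((hτ (e i)).norm.pow_const 2).ennreal_ofReal
    _ ≤ ∑ i, ENNReal.ofReal (b * ‖e i‖ ^ 2) := Finset.sum_le_sum fun i _ => hbessel (e i)
    _ < ∞ := ENNReal.sum_lt_top.mpr fun _ _ => ENNReal.ofReal_lt_top

theorem stmt_3_general
    {Ω : Type*} [MeasurableSpace Ω] (μ : Measure Ω)
    {H : Type*} [NormedAddCommGroup H] [InnerProductSpace ℂ H] [FiniteDimensional ℂ H]
    (τ : Ω → H) (b : ℝ)
    (hmeas : ∀ h : H, Measurable fun α => ⟪h, τ α⟫_ℂ)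
    (hbessel : ∀ h : H,
      ∫⁻ α, ENNReal.ofReal (‖⟪h, τ α⟫_ℂ‖ ^ 2) ∂μ ≤ ENNReal.ofReal (b * ‖h‖ ^ 2))
    (hnorm : ∀ α, ‖τ α‖ = 1) :
    ∫ α, ∫ β, ‖⟪τ α, τ β⟫_ℂ‖ ^ 2 ∂μ ∂μ
      ≥ (μ Set.univ).toReal ^ 2 / (Module.finrank ℂ H : ℝ) := by
  have := isFiniteMeasure_of_bessel hmeas hbessel hnorm
  exact welch_bound μ hmeas hnorm

/-- First-order continuous Welch bound (integral form):
`∫∫ |⟨τ_α, τ_β⟩|² dμ dμ ≥ μ(Ω)²/d` for a normalized continuous Bessel family. -/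
theorem stmt_3
    {Ω : Type*} [MeasurableSpace Ω] (μ : Measure Ω)
    {H : Type*} [NormedAddCommGroup H] [InnerProductSpace ℂ H] [FiniteDimensional ℂ H]
    (hd : 0 < Module.finrank ℂ H)
    (τ : Ω → H) (b : ℝ) (hb : 0 < b)
    (hmeas : ∀ h : H, Measurable fun α => ⟪h, τ α⟫_ℂ)
    (hbessel : ∀ h : H,
      ∫⁻ α, ENNReal.ofReal (‖⟪h, τ α⟫_ℂ‖ ^ 2) ∂μ ≤ ENNReal.ofReal (b * ‖h‖ ^ 2))
    (hnorm : ∀ α, ‖τ α‖ = 1) :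
    ∫ α, ∫ β, ‖⟪τ α, τ β⟫_ℂ‖ ^ 2 ∂μ ∂μ
      ≥ (μ Set.univ).toReal ^ 2 / (Module.finrank ℂ H : ℝ) :=
  stmt_3_general μ τ b hmeas hbessel hnorm
end

section
/- Let {τ_α}_{α∈Ω} be a normalized continuous Bessel family for a d-dimensional Hilbert space H, and suppose the diagonal Δ = {(α,α) : α ∈ Ω} is measurable in Ω × Ω. Then sup_{α≠β} |⟨τ_α, τ_β⟩|² ≥ [μ(Ω)²/d − (μ×μ)(Δ)] / (μ×μ)((Ω×Ω)∖Δ). -/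
/-!
Lift each vector `x` to the Hilbert–Schmidt coordinates `M x` of the rank-one operator `x x*`
(in an orthonormal basis); then `|⟪x, y⟫|² = ⟪M x, M y⟫` is bilinear in the lifts, so the
frame potential `∫∫ |⟪τ α, τ β⟫|²` equals `‖∫ M (τ α)‖²`. Since `⟪Id, M x⟫ = ‖x‖² = 1` and
`‖Id‖² = d`, Cauchy–Schwarz against the identity gives `μ(Ω)² ≤ d · ∫∫ |⟪τ α, τ β⟫|²`.
Splitting the double integral into the diagonal, where the integrand is at most `1`, and its
complement, where it is at most the supremum, yields the bound.
-/

open MeasureTheory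
open scoped InnerProductSpace

section

variable {𝕜 : Type*} [RCLike 𝕜]

section Integral

variable {Ω Ω' E : Type*} [MeasurableSpace Ω] [MeasurableSpace Ω'] {μ : Measure Ω}
  {ν : Measure Ω'} [NormedAddCommGroup E] [InnerProductSpace 𝕜 E] [CompleteSpace E]
  [NormedSpace ℝ E] {f : Ω → E} {g : Ω' → E}

theorem integral_prod_inner [SFinite μ] [SFinite ν] (hf : Integrable f μ) (hg : Integrable g ν) :
    ∫ p : Ω × Ω', ⟪f p.1, g p.2⟫_𝕜 ∂(μ.prod ν) = ⟪∫ a, f a ∂μ, ∫ b, g b ∂ν⟫_𝕜 := by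
  have hfg : Integrable (fun p : Ω × Ω' => ⟪f p.1, g p.2⟫_𝕜) (μ.prod ν) :=
    hf.op_fst_snd continuous_inner ⟨1, fun x y => by simpa using norm_inner_le_norm x y⟩ hg
  rw [integral_prod _ hfg]
  simp only [integral_inner hg]
  rw [← inner_conj_symm, ← integral_inner hf, ← integral_conj]
  simp only [inner_conj_symm]

theorem measureReal_univ_le_norm_mul_norm_integral {u : E} (hf : Integrable f μ)
    (hu : ∀ a, ⟪u, f a⟫_𝕜 = 1) : μ.real Set.univ ≤ ‖u‖ * ‖∫ a, f a ∂μ‖ := by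
  have h : ⟪u, ∫ a, f a ∂μ⟫_𝕜 = μ.real Set.univ := by
    simp [← integral_inner hf, hu, RCLike.real_smul_eq_coe_mul]
  calc μ.real Set.univ = ‖⟪u, ∫ a, f a ∂μ⟫_𝕜‖ := by simp [h, abs_of_nonneg measureReal_nonneg]
    _ ≤ ‖u‖ * ‖∫ a, f a ∂μ‖ := norm_inner_le_norm _ _

end Integral

section HilbertSchmidtCoordinates

variable {ι E : Type*} [Fintype ι] [NormedAddCommGroup E] [InnerProductSpace 𝕜 E]

namespace OrthonormalBasis

/-- The matrix `(⟪e i, x⟫ ⟪x, e j⟫)ᵢⱼ` of the rank-one operator `y ↦ ⟪x, y⟫ • x` in the basis `e`,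
as a vector of `EuclideanSpace`, whose inner product is the Hilbert–Schmidt one. -/
noncomputable def rankOneCoords (e : OrthonormalBasis ι 𝕜 E) (x : E) :
    EuclideanSpace 𝕜 (ι × ι) :=
  WithLp.toLp 2 fun ij => ⟪e ij.1, x⟫_𝕜 * ⟪x, e ij.2⟫_𝕜

variable (e : OrthonormalBasis ι 𝕜 E)

theorem continuous_rankOneCoords : Continuous e.rankOneCoords := by
  unfold rankOneCoords
  fun_prop

theorem inner_rankOneCoords (x y : E) :
    ⟪e.rankOneCoords x, e.rankOneCoords y⟫_𝕜 = (‖⟪x, y⟫_𝕜‖ : 𝕜) ^ 2 := by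
  rw [← RCLike.mul_conj, inner_conj_symm, ← e.sum_inner_mul_inner x y,
    ← e.sum_inner_mul_inner y x, Finset.sum_mul_sum, ← Finset.sum_product',
    Finset.univ_product_univ, rankOneCoords, rankOneCoords, PiLp.inner_apply]
  refine Finset.sum_congr rfl fun ij _ => ?_
  simp only [RCLike.inner_apply, map_mul, inner_conj_symm]
  ring

theorem norm_rankOneCoords (x : E) : ‖e.rankOneCoords x‖ = ‖x‖ ^ 2 := by
  have h : ‖e.rankOneCoords x‖ ^ 2 = (‖x‖ ^ 2) ^ 2 := by
    rw [@norm_sq_eq_re_inner 𝕜, inner_rankOneCoords, inner_self_eq_norm_sq_to_K]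
    norm_cast
    simp
  exact (pow_left_inj₀ (norm_nonneg _) (by positivity) two_ne_zero).mp h

end OrthonormalBasis

variable (𝕜 ι) [DecidableEq ι]

noncomputable def identityCoords : EuclideanSpace 𝕜 (ι × ι) :=
  WithLp.toLp 2 fun ij => if ij.1 = ij.2 then 1 else 0

theorem norm_identityCoords_sq : ‖identityCoords 𝕜 ι‖ ^ 2 = Fintype.card ι := by
  simp only [EuclideanSpace.norm_sq_eq, identityCoords, Fintype.sum_prod_type]
  simp [apply_ite]

variable {𝕜 ι}

theorem OrthonormalBasis.inner_identityCoords_rankOneCoords (e : OrthonormalBasis ι 𝕜 E)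
    (x : E) : ⟪identityCoords 𝕜 ι, e.rankOneCoords x⟫_𝕜 = (‖x‖ : 𝕜) ^ 2 := by
  simp only [identityCoords, rankOneCoords, PiLp.inner_apply, Fintype.sum_prod_type,
    RCLike.inner_apply, MonoidWithZeroHom.map_ite_one_zero, mul_ite, mul_one, mul_zero,
    Finset.sum_ite_eq, Finset.mem_univ, ↓reduceIte]
  rw [← inner_self_eq_norm_sq_to_K, ← e.sum_inner_mul_inner]
  simp_rw [mul_comm]

end HilbertSchmidtCoordinates

theorem stronglyMeasurable_of_measurable_inner {Ω E : Type*} [MeasurableSpace Ω]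
    [NormedAddCommGroup E] [InnerProductSpace 𝕜 E] [FiniteDimensional 𝕜 E] {τ : Ω → E}
    (h : ∀ x, Measurable fun a => ⟪x, τ a⟫_𝕜) : StronglyMeasurable τ := by
  let e := stdOrthonormalBasis 𝕜 E
  have hτ : τ = fun a => ∑ i, ⟪e i, τ a⟫_𝕜 • e i := funext fun a => (e.sum_repr' (τ a)).symm
  rw [hτ]
  exact Finset.stronglyMeasurable_fun_sum _ fun i _ =>
    (h (e i)).stronglyMeasurable.smul_const (e i)

theorem norm_inner_sq_le_one {E : Type*} [NormedAddCommGroup E] [InnerProductSpace 𝕜 E] {x y : E}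
    (hx : ‖x‖ ≤ 1) (hy : ‖y‖ ≤ 1) : ‖⟪x, y⟫_𝕜‖ ^ 2 ≤ 1 :=
  pow_le_one₀ (norm_nonneg _) <|
    (norm_inner_le_norm _ _).trans (mul_le_one₀ hx (norm_nonneg _) hy)

section FramePotential

variable (𝕜) {Ω E : Type*} [MeasurableSpace Ω] [NormedAddCommGroup E] [InnerProductSpace 𝕜 E]

noncomputable def framePotential (μ : Measure Ω) (τ : Ω → E) : ℝ :=
  ∫ p : Ω × Ω, ‖⟪τ p.1, τ p.2⟫_𝕜‖ ^ 2 ∂(μ.prod μ)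

variable {𝕜} {μ : Measure Ω} [IsFiniteMeasure μ] {τ : Ω → E}

theorem sq_measureReal_univ_le_finrank_mul_framePotential [FiniteDimensional 𝕜 E]
    (hτ : AEStronglyMeasurable τ μ) (hnorm : ∀ a, ‖τ a‖ = 1) :
    μ.real Set.univ ^ 2 ≤ Module.finrank 𝕜 E * framePotential 𝕜 μ τ := by
  let e := stdOrthonormalBasis 𝕜 E
  have hM : Integrable (fun a => e.rankOneCoords (τ a)) μ :=
    Integrable.of_bound (e.continuous_rankOneCoords.comp_aestronglyMeasurable hτ) 1
      (ae_of_all _ fun a => by simp [e.norm_rankOneCoords, hnorm])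
  have hpot : framePotential 𝕜 μ τ = ‖∫ a, e.rankOneCoords (τ a) ∂μ‖ ^ 2 := by
    have h := integral_prod_inner (𝕜 := 𝕜) hM hM
    simp only [e.inner_rankOneCoords, inner_self_eq_norm_sq_to_K] at h
    exact_mod_cast h
  have hcs := measureReal_univ_le_norm_mul_norm_integral (𝕜 := 𝕜) hM (u := identityCoords 𝕜 _)
    fun a => by simp [e.inner_identityCoords_rankOneCoords, hnorm]
  calc μ.real Set.univ ^ 2
      ≤ (‖identityCoords 𝕜 _‖ * ‖∫ a, e.rankOneCoords (τ a) ∂μ‖) ^ 2 :=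
        pow_le_pow_left₀ measureReal_nonneg hcs 2
    _ = Module.finrank 𝕜 E * framePotential 𝕜 μ τ := by
        rw [mul_pow, norm_identityCoords_sq, hpot, Fintype.card_fin]

theorem framePotential_le_of_forall_ne {S : ℝ} (hτ : AEStronglyMeasurable τ μ)
    (hnorm : ∀ a, ‖τ a‖ ≤ 1) (hΔ : MeasurableSet {p : Ω × Ω | p.1 = p.2})
    (hS : ∀ a b, a ≠ b → ‖⟪τ a, τ b⟫_𝕜‖ ^ 2 ≤ S) :
    framePotential 𝕜 μ τ ≤
      (μ.prod μ).real {p | p.1 = p.2} + S * (μ.prod μ).real {p | p.1 = p.2}ᶜ := by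
  have hle : ∀ p : Ω × Ω, ‖⟪τ p.1, τ p.2⟫_𝕜‖ ^ 2 ≤ 1 := fun p =>
    norm_inner_sq_le_one (hnorm _) (hnorm _)
  have hF : Integrable (fun p : Ω × Ω => ‖⟪τ p.1, τ p.2⟫_𝕜‖ ^ 2) (μ.prod μ) :=
    Integrable.of_bound ((hτ.comp_fst.inner hτ.comp_snd).norm.pow 2) 1
      (ae_of_all _ fun p => by simpa using hle p)
  have hdiag := setIntegral_mono_on hF.integrableOn (integrableOn_const (C := 1)) hΔ
    fun p _ => hle p
  have hoff := setIntegral_mono_on hF.integrableOn (integrableOn_const (C := S)) hΔ.compl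
    fun p hp => hS p.1 p.2 hp
  rw [framePotential, ← integral_add_compl hΔ hF]
  simp only [setIntegral_const, smul_eq_mul, mul_one] at hdiag hoff
  linarith

end FramePotential

end

theorem stmt_5_general
    {Ω : Type*} [MeasurableSpace Ω] (μ : Measure Ω)
    {H : Type*} [NormedAddCommGroup H] [InnerProductSpace ℂ H] [FiniteDimensional ℂ H]
    (τ : Ω → H)
    (hmeas : ∀ h : H, Measurable fun α => ⟪h, τ α⟫_ℂ)
    (hnorm : ∀ α, ‖τ α‖ = 1)
    (hΔ : MeasurableSet {p : Ω × Ω | p.1 = p.2}) :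
    sSup {x : ℝ | ∃ α β : Ω, α ≠ β ∧ x = ‖⟪τ α, τ β⟫_ℂ‖ ^ 2}
      ≥ ((μ Set.univ).toReal ^ 2 / (Module.finrank ℂ H : ℝ)
          - ((μ.prod μ) {p : Ω × Ω | p.1 = p.2}).toReal)
        / ((μ.prod μ) {p : Ω × Ω | p.1 = p.2}ᶜ).toReal := by
  set T := {x : ℝ | ∃ α β : Ω, α ≠ β ∧ x = ‖⟪τ α, τ β⟫_ℂ‖ ^ 2}
  have hT_le_one : ∀ x ∈ T, x ≤ 1 := by
    rintro _ ⟨α, β, -, rfl⟩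
    exact norm_inner_sq_le_one (hnorm α).le (hnorm β).le
  have hS0 : 0 ≤ sSup T := Real.sSup_nonneg (by rintro _ ⟨α, β, -, rfl⟩; positivity)
  have hS : ∀ α β, α ≠ β → ‖⟪τ α, τ β⟫_ℂ‖ ^ 2 ≤ sSup T := fun α β h =>
    le_csSup ⟨1, hT_le_one⟩ ⟨α, β, h, rfl⟩
  refine div_le_of_le_mul₀ ENNReal.toReal_nonneg hS0 ?_
  by_cases hμ : IsFiniteMeasure μ
  · have hτ : AEStronglyMeasurable τ μ :=
      (stronglyMeasurable_of_measurable_inner (𝕜 := ℂ) hmeas).aestronglyMeasurable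
    have hlower := sq_measureReal_univ_le_finrank_mul_framePotential (𝕜 := ℂ) hτ hnorm
    have hupper := framePotential_le_of_forall_ne hτ (fun α => (hnorm α).le) hΔ hS
    have hdiv : (μ Set.univ).toReal ^ 2 / Module.finrank ℂ H ≤ framePotential ℂ μ τ :=
      div_le_of_le_mul₀ (Nat.cast_nonneg _) (integral_nonneg fun _ => by positivity)
        (by rw [mul_comm]; exact hlower)
    simp only [measureReal_def] at hupper
    linarith
  · -- `(μ Set.univ).toReal = 0` for an infinite measure, so the numerator is nonpositive.
    rw [not_isFiniteMeasure_iff.mp hμ, ENNReal.toReal_top, zero_pow two_ne_zero, zero_div,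
      zero_sub]
    exact (neg_nonpos.mpr ENNReal.toReal_nonneg).trans (mul_nonneg hS0 ENNReal.toReal_nonneg)

/-- First order continuous Welch bound:
`sup_{α≠β} |⟨τ_α,τ_β⟩|² ≥ [μ(Ω)²/d − (μ×μ)(Δ)] / (μ×μ)((Ω×Ω)∖Δ)`. -/
theorem stmt_5
    {Ω : Type*} [MeasurableSpace Ω] (μ : Measure Ω)
    {H : Type*} [NormedAddCommGroup H] [InnerProductSpace ℂ H] [FiniteDimensional ℂ H]
    (hd : 0 < Module.finrank ℂ H)
    (τ : Ω → H) (b : ℝ) (hb : 0 < b)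
    (hmeas : ∀ h : H, Measurable fun α => ⟪h, τ α⟫_ℂ)
    (hbessel : ∀ h : H,
      ∫⁻ α, ENNReal.ofReal (‖⟪h, τ α⟫_ℂ‖ ^ 2) ∂μ ≤ ENNReal.ofReal (b * ‖h‖ ^ 2))
    (hnorm : ∀ α, ‖τ α‖ = 1)
    (hΔ : MeasurableSet {p : Ω × Ω | p.1 = p.2})
    (hoff : 0 < (μ.prod μ) {p : Ω × Ω | p.1 = p.2}ᶜ) :
    sSup {x : ℝ | ∃ α β : Ω, α ≠ β ∧ x = ‖⟪τ α, τ β⟫_ℂ‖ ^ 2}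
      ≥ ((μ Set.univ).toReal ^ 2 / (Module.finrank ℂ H : ℝ)
          - ((μ.prod μ) {p : Ω × Ω | p.1 = p.2}).toReal)
        / ((μ.prod μ) {p : Ω × Ω | p.1 = p.2}ᶜ).toReal :=
  stmt_5_general μ τ hmeas hnorm hΔ
end

section
/- Let {τ_α}_{α∈Ω} be a normalized continuous Bessel family for a d-dimensional Hilbert space H. Then for every natural number m ≥ 1, ∫_Ω ∫_Ω |⟨τ_α, τ_β⟩|^{2m} dμ(α) dμ(β) ≥ μ(Ω)² / C(d+m−1, m), where C(d+m−1, m) is the binomial coefficient. -/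
/-!
Write `τ_α^{⊗m}` in an orthonormal basis of the symmetric power `Symᵐ H`; this gives unit vectors
`φ_α` in a space of dimension `C(d+m−1, m)` with `⟨φ_α, φ_β⟩ = ⟨τ_α, τ_β⟩ᵐ`, so it suffices to prove
the first-order bound `μ(Ω)² ≤ N ∫∫ |⟨φ_α, φ_β⟩|²` for unit vectors in an `N`-dimensional space.
For that, let `S = ∫ φ_α φ_α* dμ` be the frame operator: the double integral is `‖S‖²_HS`, and
`tr S = μ(Ω)`, so Cauchy–Schwarz on the diagonal gives `μ(Ω)² = (tr S)² ≤ N ∑ₖ |Sₖₖ|² ≤ N ‖S‖²_HS`.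
-/

open MeasureTheory
open scoped InnerProductSpace ComplexConjugate

namespace EuclideanSpace

variable {ι : Type*} [DecidableEq ι]

/-- The coordinates of `x^{⊗m}` in the orthonormal basis of the symmetric power indexed by
multisets of size `m`. -/
noncomputable def symPow (m : ℕ) (x : EuclideanSpace ℂ ι) : EuclideanSpace ℂ (Sym ι m) :=
  WithLp.toLp 2 fun k => (√(k.1.countPerms : ℝ) : ℂ) * (k.1.map fun i => x i).prod

theorem measurable_symPow_apply {Ω : Type*} [MeasurableSpace Ω] {m : ℕ}
    {φ : Ω → EuclideanSpace ℂ ι} (hφ : ∀ i, Measurable fun α => φ α i) (k : Sym ι m) :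
    Measurable fun α => symPow m (φ α) k := by
  have hprod := Multiset.measurable_fun_prod (k.1.map fun i α => φ α i)
    (by simpa using fun i _ => hφ i)
  simp only [Multiset.map_map, Function.comp_def] at hprod
  exact measurable_const.mul hprod

variable [Fintype ι]

-- The multinomial theorem.
theorem inner_symPow (m : ℕ) (x y : EuclideanSpace ℂ ι) :
    ⟪symPow m x, symPow m y⟫_ℂ = ⟪x, y⟫_ℂ ^ m := by
  simp only [PiLp.inner_apply, RCLike.inner_apply', Finset.sum_pow, Finset.sym_univ]
  refine Finset.sum_congr rfl fun k _ => ?_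
  have hsqrt : (√(k.1.countPerms : ℝ) : ℂ) * √(k.1.countPerms : ℝ) = k.1.countPerms := by
    rw [← Complex.ofReal_mul, Real.mul_self_sqrt (Nat.cast_nonneg _), Complex.ofReal_natCast]
  simp only [symPow, map_mul, Complex.conj_ofReal, map_multiset_prod, Multiset.map_map,
    Function.comp_def, Multiset.prod_map_mul, ← hsqrt]
  ring

theorem norm_symPow (m : ℕ) (x : EuclideanSpace ℂ ι) : ‖symPow m x‖ = ‖x‖ ^ m := by
  have h := inner_symPow m x x
  rw [inner_self_eq_norm_sq_to_K, inner_self_eq_norm_sq_to_K, ← pow_mul, mul_comm, pow_mul]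
    at h
  exact (pow_left_inj₀ (norm_nonneg _) (by positivity) two_ne_zero).1 (by exact_mod_cast h)

end EuclideanSpace

section FramePotential

variable {Ω ι : Type*} [MeasurableSpace Ω]

/-- The matrix of the frame operator `∫ φ_α φ_α* dμ`. -/
noncomputable def frameMatrix (μ : Measure Ω) (φ : Ω → EuclideanSpace ℂ ι) : Matrix ι ι ℂ :=
  Matrix.of fun k l => ∫ α, φ α k * conj (φ α l) ∂μ

variable {μ : Measure Ω} {φ : Ω → EuclideanSpace ℂ ι}

theorem frameMatrix_apply (k l : ι) :
    frameMatrix μ φ k l = ∫ α, φ α k * conj (φ α l) ∂μ :=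
  rfl

theorem frameMatrix_apply_self (k : ι) :
    frameMatrix μ φ k k = ((∫ α, ‖φ α k‖ ^ 2 ∂μ : ℝ) : ℂ) := by
  simp only [frameMatrix_apply, RCLike.mul_conj]
  norm_cast

theorem conj_frameMatrix_apply (k l : ι) :
    conj (frameMatrix μ φ k l) = frameMatrix μ φ l k := by
  simp only [frameMatrix_apply, ← integral_conj, map_mul, Complex.conj_conj, mul_comm]

variable [Fintype ι] [IsFiniteMeasure μ]

theorem integrable_apply_mul_conj_apply (hφ : ∀ k, Measurable fun α => φ α k) {C : ℝ}
    (hφC : ∀ α, ‖φ α‖ ≤ C) (k l : ι) :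
    Integrable (fun α => φ α k * conj (φ α l)) μ := by
  have hmeas := (hφ k).mul (Complex.continuous_conj.measurable.comp (hφ l))
  refine .of_bound hmeas.aestronglyMeasurable (C * C) (.of_forall fun α => ?_)
  rw [norm_mul, RCLike.norm_conj]
  exact mul_le_mul ((PiLp.norm_apply_le _ _).trans (hφC α))
    ((PiLp.norm_apply_le _ _).trans (hφC α)) (norm_nonneg _) ((norm_nonneg _).trans (hφC α))

theorem integral_integral_norm_inner_sq_eq_sum_norm_frameMatrix_sq
    (hφ : ∀ k, Measurable fun α => φ α k) {C : ℝ} (hφC : ∀ α, ‖φ α‖ ≤ C) :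
    ∫ α, ∫ β, ‖⟪φ α, φ β⟫_ℂ‖ ^ 2 ∂μ ∂μ = ∑ k, ∑ l, ‖frameMatrix μ φ k l‖ ^ 2 := by
  have hint := integrable_apply_mul_conj_apply (μ := μ) hφ hφC
  have hpointwise : ∀ α β, ((‖⟪φ α, φ β⟫_ℂ‖ ^ 2 : ℝ) : ℂ)
      = ∑ k, ∑ l, (φ α k * conj (φ α l)) * (φ β l * conj (φ β k)) := by
    intro α β
    rw [Complex.ofReal_pow, ← Complex.conj_mul']
    simp only [PiLp.inner_apply, RCLike.inner_apply', map_sum, map_mul, Complex.conj_conj,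
      Finset.sum_mul_sum]
    exact Finset.sum_congr rfl fun k _ => Finset.sum_congr rfl fun l _ => by ring
  have hinner : ∀ α, ∫ β, ((‖⟪φ α, φ β⟫_ℂ‖ ^ 2 : ℝ) : ℂ) ∂μ
      = ∑ k, ∑ l, (φ α k * conj (φ α l)) * frameMatrix μ φ l k := by
    intro α
    simp only [hpointwise]
    rw [integral_finsetSum _ fun k _ => integrable_finsetSum _ fun l _ =>
      (hint l k).const_mul _]
    refine Finset.sum_congr rfl fun k _ => ?_
    rw [integral_finsetSum _ fun l _ => (hint l k).const_mul _]
    exact Finset.sum_congr rfl fun l _ => integral_const_mul _ _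
  have hcast : ∫ α, ∫ β, ((‖⟪φ α, φ β⟫_ℂ‖ ^ 2 : ℝ) : ℂ) ∂μ ∂μ
      = ((∫ α, ∫ β, ‖⟪φ α, φ β⟫_ℂ‖ ^ 2 ∂μ ∂μ : ℝ) : ℂ) := by
    simp only [integral_complex_ofReal]
  apply Complex.ofReal_injective
  rw [← hcast]
  simp only [hinner]
  rw [integral_finsetSum _ fun k _ => integrable_finsetSum _ fun l _ =>
    (hint k l).mul_const _]
  push_cast
  refine Finset.sum_congr rfl fun k _ => ?_
  rw [integral_finsetSum _ fun l _ => (hint k l).mul_const _]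
  refine Finset.sum_congr rfl fun l _ => ?_
  rw [integral_mul_const, ← frameMatrix_apply, ← conj_frameMatrix_apply k l, Complex.mul_conj']

theorem welch_bound_s6 (hφ : ∀ k, Measurable fun α => φ α k) (hφ1 : ∀ α, ‖φ α‖ = 1) :
    (μ Set.univ).toReal ^ 2 ≤ Fintype.card ι * ∫ α, ∫ β, ‖⟪φ α, φ β⟫_ℂ‖ ^ 2 ∂μ ∂μ := by
  have hφC : ∀ α, ‖φ α‖ ≤ 1 := fun α => (hφ1 α).le
  have hint : ∀ k, Integrable (fun α => ‖φ α k‖ ^ 2) μ := fun k =>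
    .of_bound ((hφ k).norm.pow_const 2).aestronglyMeasurable 1 (.of_forall fun α => by
      simpa using (PiLp.norm_apply_le _ k).trans (hφC α))
  have htrace : ∑ k, ∫ α, ‖φ α k‖ ^ 2 ∂μ = (μ Set.univ).toReal := by
    simp [← integral_finsetSum _ fun k _ => hint k, ← EuclideanSpace.norm_sq_eq, hφ1,
      Measure.real]
  have hdiag : ∀ k, (∫ α, ‖φ α k‖ ^ 2 ∂μ) ^ 2 ≤ ∑ l, ‖frameMatrix μ φ k l‖ ^ 2 := by
    intro k
    rw [← Real.norm_of_nonneg (integral_nonneg fun α => sq_nonneg ‖φ α k‖), ← Complex.norm_real,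
      ← frameMatrix_apply_self]
    exact Finset.single_le_sum (f := fun l => ‖frameMatrix μ φ k l‖ ^ 2)
      (fun l _ => sq_nonneg _) (Finset.mem_univ k)
  calc (μ Set.univ).toReal ^ 2 = (∑ k, ∫ α, ‖φ α k‖ ^ 2 ∂μ) ^ 2 := by rw [htrace]
    _ ≤ Fintype.card ι * ∑ k, (∫ α, ‖φ α k‖ ^ 2 ∂μ) ^ 2 := sq_sum_le_card_mul_sum_sq
    _ ≤ Fintype.card ι * ∑ k, ∑ l, ‖frameMatrix μ φ k l‖ ^ 2 := by gcongr with k; exact hdiag k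
    _ = Fintype.card ι * ∫ α, ∫ β, ‖⟪φ α, φ β⟫_ℂ‖ ^ 2 ∂μ ∂μ := by
      rw [integral_integral_norm_inner_sq_eq_sum_norm_frameMatrix_sq hφ hφC]

end FramePotential

theorem stmt_6_general
    {Ω : Type*} [MeasurableSpace Ω] (μ : Measure Ω)
    {H : Type*} [NormedAddCommGroup H] [InnerProductSpace ℂ H] [FiniteDimensional ℂ H]
    (τ : Ω → H)
    (hmeas : ∀ h : H, Measurable fun α => ⟪h, τ α⟫_ℂ)
    (hnorm : ∀ α, ‖τ α‖ = 1)
    (m : ℕ) :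
    ∫ α, ∫ β, ‖⟪τ α, τ β⟫_ℂ‖ ^ (2 * m) ∂μ ∂μ
      ≥ (μ Set.univ).toReal ^ 2
          / ((Module.finrank ℂ H + m - 1).choose m : ℝ) := by
  have hpotential_nonneg : 0 ≤ ∫ α, ∫ β, ‖⟪τ α, τ β⟫_ℂ‖ ^ (2 * m) ∂μ ∂μ :=
    integral_nonneg fun α => integral_nonneg fun β => by positivity
  by_cases hμ : IsFiniteMeasure μ
  swap
  -- an infinite measure has `(μ Set.univ).toReal = 0`
  · simpa [not_isFiniteMeasure_iff.1 hμ] using hpotential_nonneg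
  let e := stdOrthonormalBasis ℂ H
  let φ : Ω → EuclideanSpace ℂ (Sym (Fin (Module.finrank ℂ H)) m) :=
    fun α => EuclideanSpace.symPow m (e.repr (τ α))
  have hφ : ∀ k, Measurable fun α => φ α k := EuclideanSpace.measurable_symPow_apply
    fun i => by simpa [e.repr_apply_apply] using hmeas (e i)
  have hφ1 : ∀ α, ‖φ α‖ = 1 := by simp [φ, EuclideanSpace.norm_symPow, hnorm]
  have hinner : ∀ α β, ‖⟪φ α, φ β⟫_ℂ‖ ^ 2 = ‖⟪τ α, τ β⟫_ℂ‖ ^ (2 * m) := by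
    simp [φ, EuclideanSpace.inner_symPow, pow_mul']
  have hwelch := welch_bound_s6 (μ := μ) hφ hφ1
  simp only [hinner, Sym.card_sym_eq_choose, Fintype.card_fin] at hwelch
  exact div_le_of_le_mul₀ (Nat.cast_nonneg _) hpotential_nonneg (by linarith)

/-- Higher order continuous Welch bound (integral form):
`∫∫ |⟨τ_α, τ_β⟩|^{2m} dμ dμ ≥ μ(Ω)² / C(d+m−1, m)`. -/
theorem stmt_6
    {Ω : Type*} [MeasurableSpace Ω] (μ : Measure Ω)
    {H : Type*} [NormedAddCommGroup H] [InnerProductSpace ℂ H] [FiniteDimensional ℂ H]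
    (hd : 0 < Module.finrank ℂ H)
    (τ : Ω → H) (b : ℝ) (hb : 0 < b)
    (hmeas : ∀ h : H, Measurable fun α => ⟪h, τ α⟫_ℂ)
    (hbessel : ∀ h : H,
      ∫⁻ α, ENNReal.ofReal (‖⟪h, τ α⟫_ℂ‖ ^ 2) ∂μ ≤ ENNReal.ofReal (b * ‖h‖ ^ 2))
    (hnorm : ∀ α, ‖τ α‖ = 1)
    (m : ℕ) (hm : 1 ≤ m) :
    ∫ α, ∫ β, ‖⟪τ α, τ β⟫_ℂ‖ ^ (2 * m) ∂μ ∂μ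
      ≥ (μ Set.univ).toReal ^ 2
          / ((Module.finrank ℂ H + m - 1).choose m : ℝ) :=
  stmt_6_general μ τ hmeas hnorm m
end

section
/- Let {τ_α}_{α∈Ω} be a normalized continuous Bessel family for a d-dimensional Hilbert space H with measurable diagonal Δ in Ω×Ω. Then for every m ∈ ℕ, sup_{α≠β} |⟨τ_α, τ_β⟩|^{2m} ≥ [μ(Ω)²/C(d+m−1,m) − (μ×μ)(Δ)] / (μ×μ)((Ω×Ω)∖Δ). -/
/-!
Write `τ_α` in an orthonormal basis and send it to the vector of weighted monomials
`√(multinomial s) · ∏_{i ∈ s} ⟨e_i, τ_α⟩`, indexed by the multisets `s` of size `m`; these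
vectors live in a space of dimension `C(d+m-1, m)` and their inner products are
`⟨τ_α, τ_β⟩^m`. For any bounded family `G` in `𝕜^N` the double integral
`∫∫ |⟨G α, G β⟩|²` is the squared Frobenius norm of the frame matrix `∫ G_i conj G_j`,
which is at least the sum of the squared diagonal entries, hence at least `(∫ ‖G‖²)² / N`.
With `‖τ_α‖ = 1` this gives `∫∫ |⟨τ_α, τ_β⟩|^{2m} ≥ μ(Ω)² / C(d+m-1, m)`; on the diagonal the
integrand is `1`, off the diagonal it is at most the supremum.
-/

open MeasureTheory
open scoped InnerProductSpace ENNReal ComplexConjugate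

theorem ofReal_norm_sum_conj_mul_sq {𝕜 ι : Type*} [RCLike 𝕜] [Fintype ι] (a b : ι → 𝕜) :
    ((‖∑ i, conj (a i) * b i‖ ^ 2 : ℝ) : 𝕜) =
      ∑ i, ∑ j, (a i * conj (a j)) * (conj (b i) * b j) := by
  rw [RCLike.ofReal_pow, ← RCLike.conj_mul, map_sum, Finset.sum_mul_sum]
  refine Finset.sum_congr rfl fun i _ => Finset.sum_congr rfl fun j _ => ?_
  simp only [map_mul, RCLike.conj_conj]
  ring

section FrameMatrix
variable {𝕜 Ω ι : Type*} [RCLike 𝕜] [MeasurableSpace Ω] [Fintype ι] {μ : Measure Ω}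
  [IsFiniteMeasure μ]

theorem integral_norm_sum_conj_mul_sq_eq_sum_norm_integral_sq {g : ι → Ω → 𝕜}
    (hg : ∀ i, Measurable (g i)) {C : ℝ} (hC : ∀ i x, ‖g i x‖ ≤ C) :
    ∫ p : Ω × Ω, ‖∑ i, conj (g i p.1) * g i p.2‖ ^ 2 ∂(μ.prod μ) =
      ∑ i, ∑ j, ‖∫ x, g i x * conj (g j x) ∂μ‖ ^ 2 := by
  have hconj : ∀ i, Measurable fun x => conj (g i x) := fun i =>
    RCLike.continuous_conj.measurable.comp (hg i)
  have hbound : ∀ i j x, ‖g i x‖ * ‖g j x‖ ≤ C * C := fun i j x =>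
    mul_le_mul (hC i x) (hC j x) (norm_nonneg _) ((norm_nonneg _).trans (hC i x))
  have hint : ∀ i j, Integrable (fun x => g i x * conj (g j x)) μ := fun i j =>
    .of_bound ((hg i).mul (hconj j)).aestronglyMeasurable (C * C) (ae_of_all _ fun x => by
      rw [norm_mul, RCLike.norm_conj]
      exact hbound i j x)
  have hint' : ∀ i j, Integrable (fun x => conj (g i x) * g j x) μ := fun i j =>
    .of_bound ((hconj i).mul (hg j)).aestronglyMeasurable (C * C) (ae_of_all _ fun x => by
      rw [norm_mul, RCLike.norm_conj]
      exact hbound i j x)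
  have hprod : ∀ i j, Integrable (fun p : Ω × Ω =>
      (g i p.1 * conj (g j p.1)) * (conj (g i p.2) * g j p.2)) (μ.prod μ) := fun i j =>
    (hint i j).mul_prod (hint' i j)
  apply RCLike.ofReal_injective (K := 𝕜)
  rw [← integral_ofReal]
  simp only [ofReal_norm_sum_conj_mul_sq]
  rw [integral_finsetSum _ fun i _ => integrable_finsetSum _ fun j _ => hprod i j]
  push_cast
  refine Finset.sum_congr rfl fun i _ => ?_
  rw [integral_finsetSum _ fun j _ => hprod i j]
  refine Finset.sum_congr rfl fun j _ => ?_
  rw [integral_prod_mul (fun x => g i x * conj (g j x)) (fun x => conj (g i x) * g j x),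
    ← RCLike.mul_conj, ← integral_conj]
  simp only [map_mul, RCLike.conj_conj]

theorem sq_integral_norm_sq_le_card_mul_integral_norm_inner_sq {G : Ω → EuclideanSpace 𝕜 ι}
    (hG : Measurable G) {C : ℝ} (hC : ∀ x, ‖G x‖ ≤ C) :
    (∫ x, ‖G x‖ ^ 2 ∂μ) ^ 2 ≤
      Fintype.card ι * ∫ p : Ω × Ω, ‖⟪G p.1, G p.2⟫_𝕜‖ ^ 2 ∂(μ.prod μ) := by
  have hGi : ∀ i, Measurable fun x => G x i := fun i =>
    (PiLp.continuous_apply 2 _ i).measurable.comp hG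
  have hCi : ∀ i x, ‖G x i‖ ≤ C := fun i x => (PiLp.norm_apply_le _ i).trans (hC x)
  have hsq_int : ∀ i, Integrable (fun x => ‖G x i‖ ^ 2) μ := fun i =>
    .of_bound ((hGi i).norm.pow_const 2).aestronglyMeasurable (C ^ 2) (ae_of_all _ fun x => by
      rw [Real.norm_eq_abs, abs_sq]
      exact pow_le_pow_left₀ (norm_nonneg _) (hCi i x) 2)
  have hdiag : ∀ i, ‖∫ x, G x i * conj (G x i) ∂μ‖ = ∫ x, ‖G x i‖ ^ 2 ∂μ := fun i => by
    simp only [RCLike.mul_conj, ← RCLike.ofReal_pow, integral_ofReal, RCLike.norm_ofReal]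
    exact abs_of_nonneg (integral_nonneg fun x => sq_nonneg _)
  simp only [PiLp.inner_apply, RCLike.inner_apply', EuclideanSpace.norm_sq_eq]
  rw [integral_norm_sum_conj_mul_sq_eq_sum_norm_integral_sq hGi hCi,
    integral_finsetSum _ fun i _ => hsq_int i]
  calc (∑ i, ∫ x, ‖G x i‖ ^ 2 ∂μ) ^ 2
      ≤ Fintype.card ι * ∑ i, (∫ x, ‖G x i‖ ^ 2 ∂μ) ^ 2 := sq_sum_le_card_mul_sum_sq
    _ = Fintype.card ι * ∑ i, ‖∫ x, G x i * conj (G x i) ∂μ‖ ^ 2 := by simp only [hdiag]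
    _ ≤ Fintype.card ι * ∑ i, ∑ j, ‖∫ x, G x i * conj (G x j) ∂μ‖ ^ 2 := by
      gcongr with i
      exact Finset.single_le_sum (f := fun j => ‖∫ x, G x i * conj (G x j) ∂μ‖ ^ 2)
        (fun j _ => sq_nonneg _) (Finset.mem_univ i)

end FrameMatrix

section SymPow
variable {𝕜 ι : Type*} [RCLike 𝕜] [DecidableEq ι]

/-- `x ↦ x^{⊗m}` on the symmetric power, in the orthonormal basis of normalised symmetrised
tensors: the coordinate at a multiset `s` is `√(multinomial s) · ∏_{i ∈ s} x i`. -/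
noncomputable def symPowEmbedding (m : ℕ) (x : EuclideanSpace 𝕜 ι) :
    EuclideanSpace 𝕜 (Sym ι m) :=
  WithLp.toLp 2 fun s => (√(s.1.countPerms : ℝ) : 𝕜) * (s.1.map fun i => x i).prod

theorem inner_symPowEmbedding [Fintype ι] (m : ℕ) (x y : EuclideanSpace 𝕜 ι) :
    ⟪symPowEmbedding m x, symPowEmbedding m y⟫_𝕜 = ⟪x, y⟫_𝕜 ^ m := by
  simp only [PiLp.inner_apply, RCLike.inner_apply', Finset.sum_pow, Finset.sym_univ]
  refine Finset.sum_congr rfl fun s _ => ?_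
  simp only [symPowEmbedding, map_mul, RCLike.conj_ofReal, Multiset.prod_map_mul,
    map_multiset_prod, Multiset.map_map, Function.comp_def]
  have hsqrt : ((√(s.1.countPerms : ℝ) : ℝ) : 𝕜) * (√(s.1.countPerms : ℝ) : ℝ) =
      s.1.countPerms := by
    rw [← RCLike.ofReal_mul, Real.mul_self_sqrt (Nat.cast_nonneg _), RCLike.ofReal_natCast]
  rw [mul_mul_mul_comm, hsqrt]

theorem continuous_symPowEmbedding (m : ℕ) :
    Continuous (symPowEmbedding (𝕜 := 𝕜) (ι := ι) m) := by
  unfold symPowEmbedding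
  fun_prop

end SymPow

theorem norm_inner_pow_le_one {𝕜 H : Type*} [RCLike 𝕜] [NormedAddCommGroup H]
    [InnerProductSpace 𝕜 H] {x y : H} (hx : ‖x‖ ≤ 1) (hy : ‖y‖ ≤ 1) (n : ℕ) :
    ‖⟪x, y⟫_𝕜‖ ^ n ≤ 1 :=
  pow_le_one₀ (norm_nonneg _) <|
    (norm_inner_le_norm _ _).trans (mul_le_one₀ hx (norm_nonneg _) hy)

theorem OrthonormalBasis.measurable_repr_comp {𝕜 ι Ω H : Type*} [RCLike 𝕜] [Fintype ι]
    [MeasurableSpace Ω] [NormedAddCommGroup H] [InnerProductSpace 𝕜 H]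
    (b : OrthonormalBasis ι 𝕜 H) {τ : Ω → H} (hτ : ∀ h, Measurable fun α => ⟪h, τ α⟫_𝕜) :
    Measurable fun α => b.repr (τ α) :=
  (WithLp.measurable_toLp 2 _).comp <| measurable_pi_lambda (fun α i => b.repr (τ α) i)
    fun i => by simpa only [b.repr_apply_apply] using hτ (b i)

section WeaklyMeasurableFamily
variable {𝕜 Ω H : Type*} [RCLike 𝕜] [MeasurableSpace Ω] {μ : Measure Ω}
  [NormedAddCommGroup H] [InnerProductSpace 𝕜 H] [FiniteDimensional 𝕜 H] {τ : Ω → H}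

theorem isFiniteMeasure_of_forall_lintegral_norm_inner_sq_lt_top
    (hτ : ∀ h, Measurable fun α => ⟪h, τ α⟫_𝕜)
    (hsq : ∀ h, ∫⁻ α, ENNReal.ofReal (‖⟪h, τ α⟫_𝕜‖ ^ 2) ∂μ < ∞) (hnorm : ∀ α, 1 ≤ ‖τ α‖) :
    IsFiniteMeasure μ := by
  let e := stdOrthonormalBasis 𝕜 H
  have hone : ∀ α, 1 ≤ ∑ i, ENNReal.ofReal (‖⟪e i, τ α⟫_𝕜‖ ^ 2) := fun α => by
    rw [← ENNReal.ofReal_sum_of_nonneg fun i _ => sq_nonneg _, e.sum_sq_norm_inner_right,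
      ← ENNReal.ofReal_one]
    exact ENNReal.ofReal_le_ofReal (one_le_pow₀ (hnorm α))
  refine ⟨?_⟩
  calc μ Set.univ = ∫⁻ _, 1 ∂μ := lintegral_one.symm
    _ ≤ ∫⁻ α, ∑ i, ENNReal.ofReal (‖⟪e i, τ α⟫_𝕜‖ ^ 2) ∂μ := lintegral_mono hone
    _ = ∑ i, ∫⁻ α, ENNReal.ofReal (‖⟪e i, τ α⟫_𝕜‖ ^ 2) ∂μ :=
      lintegral_finsetSum _ fun i _ => ((hτ (e i)).norm.pow_const 2).ennreal_ofReal
    _ < ∞ := ENNReal.sum_lt_top.2 fun i _ => hsq (e i)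

variable [IsFiniteMeasure μ]

theorem integrable_norm_inner_pow (hτ : ∀ h, Measurable fun α => ⟪h, τ α⟫_𝕜)
    (hnorm : ∀ α, ‖τ α‖ ≤ 1) (n : ℕ) :
    Integrable (fun p : Ω × Ω => ‖⟪τ p.1, τ p.2⟫_𝕜‖ ^ n) (μ.prod μ) := by
  let e := stdOrthonormalBasis 𝕜 H
  have hrepr := e.measurable_repr_comp hτ
  have hmeas : Measurable fun p : Ω × Ω => ⟪τ p.1, τ p.2⟫_𝕜 := by
    simpa only [Function.comp_def, LinearIsometryEquiv.inner_map_map] using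
      (hrepr.comp measurable_fst).inner (𝕜 := 𝕜) (hrepr.comp measurable_snd)
  refine .of_bound (hmeas.norm.pow_const n).aestronglyMeasurable 1 (ae_of_all _ fun p => ?_)
  rw [norm_pow, norm_norm]
  exact norm_inner_pow_le_one (hnorm _) (hnorm _) n

theorem sq_measureReal_univ_le_choose_mul_integral_norm_inner_pow
    (hτ : ∀ h, Measurable fun α => ⟪h, τ α⟫_𝕜) (hnorm : ∀ α, ‖τ α‖ = 1) (m : ℕ) :
    μ.real Set.univ ^ 2 ≤ ((Module.finrank 𝕜 H + m - 1).choose m : ℝ) *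
      ∫ p : Ω × Ω, ‖⟪τ p.1, τ p.2⟫_𝕜‖ ^ (2 * m) ∂(μ.prod μ) := by
  let e := stdOrthonormalBasis 𝕜 H
  let G : Ω → EuclideanSpace 𝕜 (Sym (Fin (Module.finrank 𝕜 H)) m) :=
    fun α => symPowEmbedding m (e.repr (τ α))
  have hinner : ∀ α β, ⟪G α, G β⟫_𝕜 = ⟪τ α, τ β⟫_𝕜 ^ m := fun α β => by
    simp only [G, inner_symPowEmbedding, LinearIsometryEquiv.inner_map_map]
  have hG_norm : ∀ α, ‖G α‖ = 1 := fun α => by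
    have h : ‖G α‖ ^ 2 = 1 := by
      rw [@norm_sq_eq_re_inner 𝕜, hinner, inner_self_eq_norm_sq_to_K, hnorm]
      simp
    exact (pow_eq_one_iff_of_nonneg (norm_nonneg _) two_ne_zero).1 h
  have hG : Measurable G :=
    (continuous_symPowEmbedding m).measurable.comp (e.measurable_repr_comp hτ)
  have hkernel : ∀ p : Ω × Ω, ‖⟪G p.1, G p.2⟫_𝕜‖ ^ 2 = ‖⟪τ p.1, τ p.2⟫_𝕜‖ ^ (2 * m) :=
    fun p => by rw [hinner, norm_pow, ← pow_mul']
  simpa only [hG_norm, hkernel, one_pow, integral_const, smul_eq_mul, mul_one,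
    Sym.card_sym_eq_choose, Fintype.card_fin] using
    sq_integral_norm_sq_le_card_mul_integral_norm_inner_sq (μ := μ) hG fun α => (hG_norm α).le

end WeaklyMeasurableFamily

theorem integral_le_mul_measureReal_add_mul_measureReal_compl {X : Type*} [MeasurableSpace X]
    {ν : Measure X} [IsFiniteMeasure ν] {D : Set X} (hD : MeasurableSet D) {φ : X → ℝ}
    (hφ : Integrable φ ν) {a b : ℝ} (ha : ∀ x ∈ D, φ x ≤ a) (hb : ∀ x ∈ Dᶜ, φ x ≤ b) :
    ∫ x, φ x ∂ν ≤ a * ν.real D + b * ν.real Dᶜ := by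
  have hset : ∀ {s : Set X} {c : ℝ}, MeasurableSet s → (∀ x ∈ s, φ x ≤ c) →
      ∫ x in s, φ x ∂ν ≤ c * ν.real s := fun {s c} hs hc => by
    rw [mul_comm, ← smul_eq_mul, ← setIntegral_const]
    exact setIntegral_mono_on hφ.integrableOn (integrableOn_const (measure_ne_top _ _)) hs hc
  rw [← integral_add_compl hD hφ]
  exact add_le_add (hset hD ha) (hset hD.compl hb)

theorem stmt_7_general
    {Ω : Type*} [MeasurableSpace Ω] (μ : Measure Ω)
    {H : Type*} [NormedAddCommGroup H] [InnerProductSpace ℂ H] [FiniteDimensional ℂ H]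
    (τ : Ω → H) (b : ℝ)
    (hmeas : ∀ h : H, Measurable fun α => ⟪h, τ α⟫_ℂ)
    (hbessel : ∀ h : H,
      ∫⁻ α, ENNReal.ofReal (‖⟪h, τ α⟫_ℂ‖ ^ 2) ∂μ ≤ ENNReal.ofReal (b * ‖h‖ ^ 2))
    (hnorm : ∀ α, ‖τ α‖ = 1)
    (hΔ : MeasurableSet {p : Ω × Ω | p.1 = p.2})
    (m : ℕ) :
    sSup {x : ℝ | ∃ α β : Ω, α ≠ β ∧ x = ‖⟪τ α, τ β⟫_ℂ‖ ^ (2 * m)}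
      ≥ ((μ Set.univ).toReal ^ 2 / ((Module.finrank ℂ H + m - 1).choose m : ℝ)
          - ((μ.prod μ) {p : Ω × Ω | p.1 = p.2}).toReal)
        / ((μ.prod μ) {p : Ω × Ω | p.1 = p.2}ᶜ).toReal := by
  have : IsFiniteMeasure μ := isFiniteMeasure_of_forall_lintegral_norm_inner_sq_lt_top hmeas
    (fun h => (hbessel h).trans_lt ENNReal.ofReal_lt_top) (fun α => (hnorm α).ge)
  set S := sSup {x : ℝ | ∃ α β : Ω, α ≠ β ∧ x = ‖⟪τ α, τ β⟫_ℂ‖ ^ (2 * m)}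
  have hle_one : ∀ α β, ‖⟪τ α, τ β⟫_ℂ‖ ^ (2 * m) ≤ 1 := fun α β =>
    norm_inner_pow_le_one (hnorm α).le (hnorm β).le _
  have hS_nonneg : 0 ≤ S := Real.sSup_nonneg fun x ⟨α, β, _, hx⟩ => hx ▸ by positivity
  have hS : ∀ p ∈ {p : Ω × Ω | p.1 = p.2}ᶜ, ‖⟪τ p.1, τ p.2⟫_ℂ‖ ^ (2 * m) ≤ S := fun p hp =>
    le_csSup ⟨1, fun x ⟨α, β, _, hx⟩ => hx ▸ hle_one α β⟩ ⟨p.1, p.2, hp, rfl⟩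
  have hsplit := integral_le_mul_measureReal_add_mul_measureReal_compl hΔ
    (integrable_norm_inner_pow (μ := μ) hmeas (fun α => (hnorm α).le) _)
    (fun p _ => hle_one p.1 p.2) hS
  have hwelch : μ.real Set.univ ^ 2 / ((Module.finrank ℂ H + m - 1).choose m : ℝ) ≤
      ∫ p, ‖⟪τ p.1, τ p.2⟫_ℂ‖ ^ (2 * m) ∂(μ.prod μ) :=
    div_le_of_le_mul₀ (Nat.cast_nonneg _) (integral_nonneg fun p => by positivity) <| by
      linarith [sq_measureReal_univ_le_choose_mul_integral_norm_inner_pow (μ := μ) hmeas hnorm m]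
  refine div_le_of_le_mul₀ ENNReal.toReal_nonneg hS_nonneg ?_
  simp only [Measure.real] at hwelch hsplit
  linarith

/-- Higher order continuous Welch bounds:
`sup_{α≠β} |⟨τ_α,τ_β⟩|^{2m} ≥ [μ(Ω)²/C(d+m−1,m) − (μ×μ)(Δ)] / (μ×μ)((Ω×Ω)∖Δ)`. -/
theorem stmt_7
    {Ω : Type*} [MeasurableSpace Ω] (μ : Measure Ω)
    {H : Type*} [NormedAddCommGroup H] [InnerProductSpace ℂ H] [FiniteDimensional ℂ H]
    (hd : 0 < Module.finrank ℂ H)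
    (τ : Ω → H) (b : ℝ) (hb : 0 < b)
    (hmeas : ∀ h : H, Measurable fun α => ⟪h, τ α⟫_ℂ)
    (hbessel : ∀ h : H,
      ∫⁻ α, ENNReal.ofReal (‖⟪h, τ α⟫_ℂ‖ ^ 2) ∂μ ≤ ENNReal.ofReal (b * ‖h‖ ^ 2))
    (hnorm : ∀ α, ‖τ α‖ = 1)
    (hΔ : MeasurableSet {p : Ω × Ω | p.1 = p.2})
    (hoff : 0 < (μ.prod μ) {p : Ω × Ω | p.1 = p.2}ᶜ)
    (m : ℕ) (hm : 1 ≤ m) :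
    sSup {x : ℝ | ∃ α β : Ω, α ≠ β ∧ x = ‖⟪τ α, τ β⟫_ℂ‖ ^ (2 * m)}
      ≥ ((μ Set.univ).toReal ^ 2 / ((Module.finrank ℂ H + m - 1).choose m : ℝ)
          - ((μ.prod μ) {p : Ω × Ω | p.1 = p.2}).toReal)
        / ((μ.prod μ) {p : Ω × Ω | p.1 = p.2}ᶜ).toReal :=
  stmt_7_general μ τ b hmeas hbessel hnorm hΔ m
end
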